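/- arXiv:1205.4525 — 3 statements merged into one kernel-verified Lean document; each statement's English description precedes it below -/
import Mathlib

section
/- Let τ ∈ ℂ with Im τ > 0. Then the theta constants satisfy Jacobi's identity θ₂(0,τ)⁴ + θ₄(0,τ)⁴ = θ₃(0,τ)⁴. -/
open Complex

/-- The Jacobi theta function `θ₁(z,τ) = −i·∑_{n∈ℤ}(−1)ⁿ q^{(n+1/2)²} e^{(2n+1)iπz}`
with `q = exp(iπτ)`, the power `q^{(n+1/2)²}` meaning `exp(iπτ(n+1/2)²)`. -/
noncomputable def jTheta₁ (z τ : ℂ) : ℂ :=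
  ∑' n : ℤ, -Complex.I * (-1 : ℂ) ^ n *
    Complex.exp (Real.pi * Complex.I * (τ * ((n : ℂ) + 1/2) ^ 2 + (2 * (n : ℂ) + 1) * z))

/-- The Jacobi theta function `θ₂(z,τ) = ∑_{n∈ℤ} q^{(n+1/2)²} e^{(2n+1)iπz}`. -/
noncomputable def jTheta₂ (z τ : ℂ) : ℂ :=
  ∑' n : ℤ,
    Complex.exp (Real.pi * Complex.I * (τ * ((n : ℂ) + 1/2) ^ 2 + (2 * (n : ℂ) + 1) * z))

/-- The Jacobi theta function `θ₃(z,τ) = ∑_{n∈ℤ} q^{n²} e^{2niπz}`. -/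
noncomputable def jTheta₃ (z τ : ℂ) : ℂ :=
  ∑' n : ℤ,
    Complex.exp (Real.pi * Complex.I * (τ * (n : ℂ) ^ 2 + 2 * (n : ℂ) * z))

/-- The Jacobi theta function `θ₄(z,τ) = ∑_{n∈ℤ}(−1)ⁿ q^{n²} e^{2niπz}`. -/
noncomputable def jTheta₄ (z τ : ℂ) : ℂ :=
  ∑' n : ℤ, (-1 : ℂ) ^ n *
    Complex.exp (Real.pi * Complex.I * (τ * (n : ℂ) ^ 2 + 2 * (n : ℂ) * z))


/-! Expanding the fourth powers over `ℤ⁴`, `θ₂(0)⁴ = ∑_v q^{|v + ½|²}` while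
`θ₃(0)⁴ - θ₄(0)⁴ = ∑_v (1 - (-1)^{Σv}) q^{|v|²} = 2 ∑_{Σv odd} q^{|v|²}`.
The reflection `v₁ + ½ ↦ -(v₁ + ½)` preserves `|v + ½|` and flips the parity of `Σv`, so `θ₂(0)⁴`
is twice its part over `Σv` even. Finally `u ↦ ½ H u`, for the `4 × 4` Hadamard matrix `H`, is an
isometry mapping `{u ∈ ℤ⁴ : Σu odd}` onto `{v + ½ : v ∈ ℤ⁴, Σv even}`. -/

open Real

local notation "ℤ⁴" => ℤ × ℤ × ℤ × ℤ

section FourFoldProduct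

variable {α R : Type*}

def prod4 [Mul R] (f : α → R) (v : α × α × α × α) : R :=
  f v.1 * (f v.2.1 * (f v.2.2.1 * f v.2.2.2))

lemma prod4_mul [CommMonoid R] (f g : α → R) (v : α × α × α × α) :
    prod4 (fun n => f n * g n) v = prod4 f v * prod4 g v := by
  simp only [prod4]
  ac_rfl

lemma hasSum_prod4 [NormedRing R] [CompleteSpace R] {f : α → R} (hf : Summable (‖f ·‖)) :
    HasSum (prod4 f) ((∑' n, f n) ^ 4) := by
  have h2 := hf.mul_norm hf
  have h3 := hf.mul_norm h2
  have h4 := hf.mul_norm h3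
  have hpow : (∑' n, f n) ^ 4 = ∑' v, prod4 f v := by
    simp only [prod4]
    rw [← tsum_mul_tsum_of_summable_norm hf h3, ← tsum_mul_tsum_of_summable_norm hf h2,
      ← tsum_mul_tsum_of_summable_norm hf hf]
    simp only [pow_succ', pow_zero, mul_one]
  exact hpow ▸ h4.of_norm.hasSum

end FourFoldProduct

def coordSum (v : ℤ⁴) : ℤ := v.1 + v.2.1 + v.2.2.1 + v.2.2.2

noncomputable def sqNorm (v : ℤ⁴) : ℂ :=
  (v.1 : ℂ) ^ 2 + (v.2.1 : ℂ) ^ 2 + (v.2.2.1 : ℂ) ^ 2 + (v.2.2.2 : ℂ) ^ 2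

noncomputable def sqNormHalfShift (v : ℤ⁴) : ℂ :=
  ((v.1 : ℂ) + 1 / 2) ^ 2 + ((v.2.1 : ℂ) + 1 / 2) ^ 2 + ((v.2.2.1 : ℂ) + 1 / 2) ^ 2 +
    ((v.2.2.2 : ℂ) + 1 / 2) ^ 2

def oddSumParam (w : ℤ⁴) : ℤ⁴ := (w.1, w.2.1, w.2.2.1, w.1 + w.2.1 + w.2.2.1 + 1 + 2 * w.2.2.2)

/-- `evenSumParam w + ½ = ½ H (oddSumParam w)` for the `4 × 4` Hadamard matrix `H`. -/
def evenSumParam (w : ℤ⁴) : ℤ⁴ :=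
  (w.1 + w.2.1 + w.2.2.1 + w.2.2.2, -w.2.2.1 - w.2.2.2 - 1, -w.2.1 - w.2.2.2 - 1, w.1 + w.2.2.2)

lemma oddSumParam_injective : Function.Injective oddSumParam := by
  rintro ⟨a, b, c, d⟩ ⟨a', b', c', d'⟩ h
  simp only [oddSumParam, Prod.mk.injEq] at h ⊢
  omega

lemma evenSumParam_injective : Function.Injective evenSumParam := by
  rintro ⟨a, b, c, d⟩ ⟨a', b', c', d'⟩ h
  simp only [evenSumParam, Prod.mk.injEq] at h ⊢
  omega

lemma range_oddSumParam : Set.range oddSumParam = {v | Odd (coordSum v)} := by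
  ext ⟨a, b, c, d⟩
  simp only [Set.mem_range, Set.mem_ofPred_eq, coordSum, oddSumParam, Prod.mk.injEq, Prod.exists]
  constructor
  · rintro ⟨p, q, r, n, rfl, rfl, rfl, rfl⟩
    exact ⟨p + q + r + n, by ring⟩
  · rintro ⟨k, hk⟩
    exact ⟨a, b, c, k - a - b - c, rfl, rfl, rfl, by omega⟩

lemma range_evenSumParam : Set.range evenSumParam = {v | Even (coordSum v)} := by
  ext ⟨a, b, c, d⟩
  simp only [Set.mem_range, Set.mem_ofPred_eq, coordSum, evenSumParam, Prod.mk.injEq,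
    Prod.exists]
  constructor
  · rintro ⟨p, q, r, n, rfl, rfl, rfl, rfl⟩
    exact ⟨p - 1, by ring⟩
  · rintro ⟨k, hk⟩
    exact ⟨k + 1, k - c - d, k - b - d, d - k - 1, by omega, by omega, by omega, by omega⟩

lemma sqNormHalfShift_evenSumParam (w : ℤ⁴) :
    sqNormHalfShift (evenSumParam w) = sqNorm (oddSumParam w) := by
  simp only [sqNormHalfShift, sqNorm, evenSumParam, oddSumParam]
  push_cast
  ring

def halfShiftReflect (v : ℤ⁴) : ℤ⁴ := (-1 - v.1, v.2)

lemma halfShiftReflect_involutive : Function.Involutive halfShiftReflect := fun v => by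
  simp [halfShiftReflect]

lemma sqNormHalfShift_halfShiftReflect (v : ℤ⁴) :
    sqNormHalfShift (halfShiftReflect v) = sqNormHalfShift v := by
  simp only [halfShiftReflect, sqNormHalfShift]
  push_cast
  ring

lemma neg_one_zpow_coordSum_halfShiftReflect (v : ℤ⁴) :
    (-1 : ℂ) ^ coordSum (halfShiftReflect v) = -(-1 : ℂ) ^ coordSum v := by
  have hsum : coordSum (halfShiftReflect v) = coordSum v + (-2 * v.1 - 1) := by
    simp only [halfShiftReflect, coordSum]
    ring
  rw [hsum, zpow_add₀ (by norm_num), zpow_sub₀ (by norm_num), zpow_mul]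
  norm_num

lemma tsum_neg_one_zpow_coordSum_mul_sqNormHalfShift (G : ℂ → ℂ) :
    ∑' v, (-1 : ℂ) ^ coordSum v * G (sqNormHalfShift v) = 0 := by
  set S := ∑' v, (-1 : ℂ) ^ coordSum v * G (sqNormHalfShift v)
  have hS : S = -S := by
    calc S = ∑' v, (-1 : ℂ) ^ coordSum (halfShiftReflect v) *
          G (sqNormHalfShift (halfShiftReflect v)) :=
          ((halfShiftReflect_involutive.toPerm _).tsum_eq _).symm
      _ = -S := by
        simp only [neg_one_zpow_coordSum_halfShiftReflect, sqNormHalfShift_halfShiftReflect,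
          neg_mul, tsum_neg, S]
  exact CharZero.eq_neg_self_iff.mp hS

theorem tsum_comp_sqNormHalfShift (G : ℂ → ℂ) (hG : Summable fun v => G (sqNormHalfShift v)) :
    ∑' v, G (sqNormHalfShift v) = ∑' v, (1 - (-1 : ℂ) ^ coordSum v) * G (sqNorm v) := by
  have hsign : Summable fun v : ℤ⁴ => (-1 : ℂ) ^ coordSum v * G (sqNormHalfShift v) :=
    .of_norm <| (summable_norm_iff.mpr hG).congr fun v => by simp [norm_zpow]
  calc ∑' v, G (sqNormHalfShift v)
      = ∑' v, (1 + (-1 : ℂ) ^ coordSum v) * G (sqNormHalfShift v) := by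
        simp only [add_mul, one_mul, hG.tsum_add hsign,
          tsum_neg_one_zpow_coordSum_mul_sqNormHalfShift, add_zero]
    _ = ∑' w, (1 + (-1 : ℂ) ^ coordSum (evenSumParam w)) *
          G (sqNormHalfShift (evenSumParam w)) := by
        refine (evenSumParam_injective.tsum_eq fun v hv => ?_).symm
        rw [range_evenSumParam]
        by_contra hodd
        rw [Set.mem_ofPred_eq, Int.not_even_iff_odd] at hodd
        exact hv (by simp [hodd.neg_one_zpow])
    _ = ∑' w, (1 - (-1 : ℂ) ^ coordSum (oddSumParam w)) * G (sqNorm (oddSumParam w)) := by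
        refine tsum_congr fun w => ?_
        have heven : evenSumParam w ∈ {v | Even (coordSum v)} :=
          range_evenSumParam ▸ Set.mem_range_self w
        have hodd : oddSumParam w ∈ {v | Odd (coordSum v)} :=
          range_oddSumParam ▸ Set.mem_range_self w
        rw [sqNormHalfShift_evenSumParam, heven.neg_one_zpow, hodd.neg_one_zpow, sub_neg_eq_add]
    _ = ∑' v, (1 - (-1 : ℂ) ^ coordSum v) * G (sqNorm v) := by
        refine oddSumParam_injective.tsum_eq
          (f := fun v => (1 - (-1 : ℂ) ^ coordSum v) * G (sqNorm v)) fun v hv => ?_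
        rw [range_oddSumParam]
        by_contra heven
        rw [Set.mem_ofPred_eq, Int.not_odd_iff_even] at heven
        exact hv (by simp [heven.neg_one_zpow])

section ThetaConstants

variable {τ : ℂ}

lemma summable_norm_cexp_mul_sq_add (hτ : 0 < τ.im) (a : ℂ) :
    Summable fun n : ℤ => ‖cexp (π * I * (τ * (n + a) ^ 2))‖ := by
  refine (((summable_jacobiTheta₂_term_iff (a * τ) τ).mpr hτ).mul_left
    (cexp (π * I * (τ * a ^ 2)))).norm.congr fun n => ?_
  rw [jacobiTheta₂_term, ← Complex.exp_add]
  ring_nf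

lemma prod4_cexp (g : ℤ → ℂ) (v : ℤ⁴) :
    prod4 (fun n => cexp (g n)) v = cexp (g v.1 + g v.2.1 + g v.2.2.1 + g v.2.2.2) := by
  simp only [prod4, ← Complex.exp_add, add_assoc]

lemma prod4_cexp_mul_sq (v : ℤ⁴) :
    prod4 (fun n : ℤ => cexp (π * I * (τ * n ^ 2))) v = cexp (π * I * (τ * sqNorm v)) := by
  rw [prod4_cexp, sqNorm]
  ring_nf

lemma prod4_cexp_mul_sq_add_half (v : ℤ⁴) :
    prod4 (fun n : ℤ => cexp (π * I * (τ * (n + 1 / 2) ^ 2))) v =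
      cexp (π * I * (τ * sqNormHalfShift v)) := by
  rw [prod4_cexp, sqNormHalfShift]
  ring_nf

lemma prod4_neg_one_zpow (v : ℤ⁴) : prod4 (fun n : ℤ => (-1 : ℂ) ^ n) v = (-1) ^ coordSum v := by
  simp only [prod4, coordSum, zpow_add₀ (by norm_num : (-1 : ℂ) ≠ 0)]
  ring

lemma hasSum_jTheta₂_zero_pow_four (hτ : 0 < τ.im) :
    HasSum (fun v => cexp (π * I * (τ * sqNormHalfShift v))) (jTheta₂ 0 τ ^ 4) := by
  simp only [jTheta₂, mul_zero, add_zero]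
  exact funext prod4_cexp_mul_sq_add_half ▸
    hasSum_prod4 (summable_norm_cexp_mul_sq_add hτ (1 / 2))

lemma hasSum_jTheta₃_zero_pow_four (hτ : 0 < τ.im) :
    HasSum (fun v => cexp (π * I * (τ * sqNorm v))) (jTheta₃ 0 τ ^ 4) := by
  simp only [jTheta₃, mul_zero, add_zero]
  exact funext prod4_cexp_mul_sq ▸
    hasSum_prod4 (by simpa using summable_norm_cexp_mul_sq_add hτ 0)

lemma hasSum_jTheta₄_zero_pow_four (hτ : 0 < τ.im) :
    HasSum (fun v => (-1 : ℂ) ^ coordSum v * cexp (π * I * (τ * sqNorm v)))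
      (jTheta₄ 0 τ ^ 4) := by
  have hterm : prod4 (fun n : ℤ => (-1 : ℂ) ^ n * cexp (π * I * (τ * n ^ 2))) =
      fun v => (-1 : ℂ) ^ coordSum v * cexp (π * I * (τ * sqNorm v)) := by
    ext v
    rw [prod4_mul, prod4_neg_one_zpow, prod4_cexp_mul_sq]
  simp only [jTheta₄, mul_zero, add_zero]
  exact hterm ▸ hasSum_prod4 (by simpa [norm_zpow] using summable_norm_cexp_mul_sq_add hτ 0)

end ThetaConstants

/-- Jacobi's identity between theta constants:
`θ₂(0,τ)⁴ + θ₄(0,τ)⁴ = θ₃(0,τ)⁴`. -/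
theorem jacobi_identity (τ : ℂ) (hτ : 0 < τ.im) :
    jTheta₂ 0 τ ^ 4 + jTheta₄ 0 τ ^ 4 = jTheta₃ 0 τ ^ 4 := by
  have h₂ := hasSum_jTheta₂_zero_pow_four hτ
  have h₃₄ := (hasSum_jTheta₃_zero_pow_four hτ).sub (hasSum_jTheta₄_zero_pow_four hτ)
  have h₂_eq : jTheta₂ 0 τ ^ 4 = jTheta₃ 0 τ ^ 4 - jTheta₄ 0 τ ^ 4 := by
    rw [← h₂.tsum_eq, ← h₃₄.tsum_eq,
      tsum_comp_sqNormHalfShift (fun x => cexp (π * I * (τ * x))) h₂.summable]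
    exact tsum_congr fun v => by ring
  rw [h₂_eq, sub_add_cancel]
end

section
/- Let τ ∈ ℂ with Im τ > 0 and set q̃ = exp(2iπτ). Then the infinite product ∏_{n=1}^∞ (1 − q̃^n) converges and the theta constants satisfy (θ₂(0,τ)·θ₃(0,τ)·θ₄(0,τ))⁸ = 2⁸·q̃·∏_{n=1}^∞ (1 − q̃^n)^{24}; in other words |θ₂(0,τ)θ₃(0,τ)θ₄(0,τ)|⁸ = 2⁸·|Δ(τ)| where Δ(τ) = q̃·∏_{n=1}^∞(1 − q̃^n)^{24} is the modular discriminant. -/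
/-!
With `q = e^{iπτ}` and `E = ∏ (1 - q^{2n})`, the Jacobi triple product gives
`θ₃(0) = E ∏ (1 + q^{2n-1})²`, `θ₄(0) = E ∏ (1 - q^{2n-1})²` and
`θ₂(0) = 2 q^{1/4} E ∏ (1 + q^{2n})²`. Euler's identity `∏ (1 + q^{2n}) (1 - q^{4n-2}) = 1`
collapses their product to `θ₂θ₃θ₄ = 2 q^{1/4} E³`, whose eighth power is the claim.

The triple product is the limit `N → ∞` of its finite form
`∏_{j<N} (1 + q^{2j+1} w)(1 + q^{2j+1} w⁻¹) = ∑_{|m| ≤ N} [2N, N+m]_{q²} q^{m²} w^m`,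
a rescaled instance of the `q`-binomial theorem. The Gaussian binomials `[2N, N+m]_{q²}` tend
to `1 / E` and are uniformly bounded, so dominated convergence applies.
-/

open Complex

open Finset Filter Topology Real

section GaussianBinomial

variable {R : Type*} [CommRing R] (x : R)

/-- The `q`-Pochhammer symbol `(x; x)ₙ`. -/
def qPochhammer (n : ℕ) : R := ∏ i ∈ range n, (1 - x ^ (i + 1))

def gaussBinom : ℕ → ℕ → R
  | _, 0 => 1
  | 0, _ + 1 => 0
  | n + 1, k + 1 => gaussBinom n k + x ^ (k + 1) * gaussBinom n (k + 1)

@[simp]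
lemma gaussBinom_zero_right (n : ℕ) : gaussBinom x n 0 = 1 := by
  cases n <;> rfl

lemma gaussBinom_succ_succ (n k : ℕ) :
    gaussBinom x (n + 1) (k + 1) = gaussBinom x n k + x ^ (k + 1) * gaussBinom x n (k + 1) :=
  rfl

lemma gaussBinom_of_lt {n k : ℕ} (h : n < k) : gaussBinom x n k = 0 := by
  induction n generalizing k with
  | zero => obtain ⟨k, rfl⟩ := Nat.exists_eq_add_one.mpr h; rfl
  | succ n ih =>
    obtain ⟨k, rfl⟩ := Nat.exists_eq_add_one.mpr (Nat.zero_lt_of_lt h)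
    rw [gaussBinom_succ_succ, ih (by omega), ih (by omega), mul_zero, add_zero]

lemma qPochhammer_succ (n : ℕ) :
    qPochhammer x (n + 1) = qPochhammer x n * (1 - x ^ (n + 1)) :=
  prod_range_succ _ _

lemma gaussBinom_mul_qPochhammer_mul_qPochhammer {n k : ℕ} (h : k ≤ n) :
    gaussBinom x n k * qPochhammer x k * qPochhammer x (n - k) = qPochhammer x n := by
  induction n generalizing k with
  | zero =>
    obtain rfl : k = 0 := by omega
    simp [qPochhammer]
  | succ n ih =>
    rcases k with _ | k
    · simp [qPochhammer]
    rcases Nat.lt_or_eq_of_le (Nat.le_of_succ_le_succ h) with hk | rfl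
    · obtain ⟨d, rfl⟩ := Nat.exists_eq_add_of_lt hk
      have h₁ := ih (k := k) (by omega)
      have h₂ := ih (k := k + 1) (by omega)
      rw [show k + d + 1 - k = d + 1 by omega, qPochhammer_succ] at h₁
      rw [show k + d + 1 - (k + 1) = d by omega] at h₂
      rw [show k + d + 1 + 1 - (k + 1) = d + 1 by omega, gaussBinom_succ_succ,
        qPochhammer_succ x d, qPochhammer_succ x (k + d + 1)]
      linear_combination (1 - x ^ (k + 1)) * h₁ + x ^ (k + 1) * (1 - x ^ (d + 1)) * h₂ +
        gaussBinom x (k + d + 1) k * qPochhammer x d * (1 - x ^ (d + 1)) * qPochhammer_succ x k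
    · have h₁ := ih (k := k) le_rfl
      rw [Nat.sub_self] at h₁
      rw [Nat.sub_self, gaussBinom_succ_succ, gaussBinom_of_lt x (Nat.lt_succ_self k),
        qPochhammer_succ]
      linear_combination (1 - x ^ (k + 1)) * h₁

/-- The `q`-binomial theorem. -/
theorem prod_one_add_pow_mul_eq_sum (n : ℕ) (z : R) :
    ∏ j ∈ range n, (1 + x ^ j * z) =
      ∑ k ∈ range (n + 1), gaussBinom x n k * x ^ k.choose 2 * z ^ k := by
  induction n generalizing z with
  | zero => simp
  | succ n ih =>
    set S := ∑ k ∈ range (n + 1), gaussBinom x n k * x ^ k.choose 2 * (x * z) ^ k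
    have hprod : ∏ j ∈ range n, (1 + x ^ (j + 1) * z) = S :=
      (prod_congr rfl fun j _ => by ring).trans (ih (x * z))
    have hleft : ∑ k ∈ range (n + 1), gaussBinom x n k * x ^ (k + 1).choose 2 * z ^ (k + 1) =
        z * S := by
      rw [mul_sum]
      refine sum_congr rfl fun k _ => ?_
      rw [Nat.choose_succ_succ', Nat.choose_one_right]
      ring
    have hright : ∑ k ∈ range (n + 1),
        x ^ (k + 1) * gaussBinom x n (k + 1) * x ^ (k + 1).choose 2 * z ^ (k + 1) + 1 = S := by
      have hS : S = ∑ k ∈ range (n + 2), gaussBinom x n k * x ^ k.choose 2 * (x * z) ^ k := by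
        rw [sum_range_succ _ (n + 1), gaussBinom_of_lt x (Nat.lt_succ_self n)]
        simp [S]
      rw [hS, sum_range_succ' _ (n + 1)]
      simp only [gaussBinom_zero_right, Nat.choose_zero_succ, pow_zero, mul_one]
      congr 1
      exact sum_congr rfl fun k _ => by ring
    rw [prod_range_succ', sum_range_succ', hprod]
    simp only [gaussBinom_succ_succ, add_mul, sum_add_distrib, hleft, gaussBinom_zero_right,
      Nat.choose_eq_zero_of_lt two_pos, pow_zero]
    linear_combination -hright

end GaussianBinomial

lemma two_mul_choose_two (k : ℕ) : (2 * k.choose 2 : ℤ) = k ^ 2 - k := by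
  qify
  rw [Nat.cast_choose_two]
  ring

lemma sum_range_two_mul_add_one (N : ℕ) : ∑ j ∈ range N, (2 * j + 1) = N ^ 2 := by
  induction N with
  | zero => rfl
  | succ N ih => rw [sum_range_succ, ih]; ring

section FiniteTripleProduct

variable {K : Type*} [Field K] {q w : K}

lemma sq_pow_mul_zpow (hq : q ≠ 0) (a : ℕ) (b : ℤ) :
    (q ^ 2) ^ a * q ^ b = q ^ (2 * a + b : ℤ) := by
  rw [← pow_mul, ← zpow_natCast, ← zpow_add₀ hq]
  push_cast
  ring_nf

theorem prod_one_add_mul_one_add_inv_eq_sum_range (hq : q ≠ 0) (hw : w ≠ 0) (N : ℕ) :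
    ∏ j ∈ range N, ((1 + q ^ (2 * j + 1) * w) * (1 + q ^ (2 * j + 1) * w⁻¹)) =
      ∑ k ∈ range (2 * N + 1),
        gaussBinom (q ^ 2) (2 * N) k * (q ^ (((k : ℤ) - N) ^ 2) * w ^ ((k : ℤ) - N)) := by
  -- the `q`-binomial theorem for `x = q²` at `z = q^{1-2N} w`; its factors with `j < N`,
  -- read backwards, are `q^{-(2j+1)} w (1 + q^{2j+1} w⁻¹)`
  set z : K := q ^ (1 - 2 * N : ℤ) * w
  have lower : ∏ j ∈ range N, (1 + (q ^ 2) ^ j * z) =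
      (q ^ N ^ 2)⁻¹ * w ^ N * ∏ j ∈ range N, (1 + q ^ (2 * j + 1) * w⁻¹) := by
    rw [← prod_range_reflect, ← sum_range_two_mul_add_one, ← prod_pow_eq_pow_sum,
      ← prod_inv_distrib, (by simp : w ^ N = ∏ _ ∈ range N, w), ← prod_mul_distrib,
      ← prod_mul_distrib]
    refine prod_congr rfl fun j hj => ?_
    have hj : j < N := mem_range.mp hj
    rw [← mul_assoc, sq_pow_mul_zpow hq,
      show 2 * ((N - 1 - j : ℕ) : ℤ) + (1 - 2 * N) = -((2 * j + 1 : ℕ) : ℤ) by omega,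
      zpow_neg, zpow_natCast]
    field_simp
    ring
  have upper : ∏ j ∈ range N, (1 + (q ^ 2) ^ (N + j) * z) =
      ∏ j ∈ range N, (1 + q ^ (2 * j + 1) * w) := by
    refine prod_congr rfl fun j _ => ?_
    rw [← mul_assoc, sq_pow_mul_zpow hq, ← zpow_natCast]
    push_cast
    ring_nf
  have terms (k : ℕ) : (q ^ 2) ^ k.choose 2 * z ^ k =
      (q ^ N ^ 2)⁻¹ * w ^ N * (q ^ (((k : ℤ) - N) ^ 2) * w ^ ((k : ℤ) - N)) := by
    have hexp :
        2 * (k.choose 2 : ℤ) + (1 - 2 * N) * k = -((N ^ 2 : ℕ) : ℤ) + ((k : ℤ) - N) ^ 2 := by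
      rw [two_mul_choose_two]
      push_cast
      ring
    have hw' : w ^ N * w ^ ((k : ℤ) - N) = w ^ k := by
      rw [← zpow_natCast, ← zpow_add₀ hw, add_sub_cancel, zpow_natCast]
    rw [mul_pow, ← mul_assoc, ← zpow_natCast (q ^ (1 - 2 * N : ℤ)), ← zpow_mul,
      sq_pow_mul_zpow hq, hexp, zpow_add₀ hq, zpow_neg, zpow_natCast, ← hw']
    ring
  refine mul_left_cancel₀ (mul_ne_zero (inv_ne_zero (pow_ne_zero (N ^ 2) hq)) (pow_ne_zero N hw)) ?_
  calc _ = ∏ j ∈ range (2 * N), (1 + (q ^ 2) ^ j * z) := by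
        rw [two_mul, prod_range_add, lower, upper, prod_mul_distrib]; ring
    _ = _ := by
      rw [prod_one_add_pow_mul_eq_sum, mul_sum]
      exact sum_congr rfl fun k _ => by rw [mul_assoc, terms]; ring

theorem prod_one_add_mul_one_add_inv_eq_sum_Icc (hq : q ≠ 0) (hw : w ≠ 0) (N : ℕ) :
    ∏ j ∈ range N, ((1 + q ^ (2 * j + 1) * w) * (1 + q ^ (2 * j + 1) * w⁻¹)) =
      ∑ m ∈ Icc (-N : ℤ) N, gaussBinom (q ^ 2) (2 * N) (N + m).toNat * (q ^ (m ^ 2) * w ^ m) := by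
  rw [prod_one_add_mul_one_add_inv_eq_sum_range hq hw]
  refine sum_nbij' (fun k => (k : ℤ) - N) (fun m => (N + m).toNat) ?_ ?_ ?_ ?_ fun k _ => ?_
  · intro k hk; simp only [mem_range, mem_Icc] at hk ⊢; omega
  · intro m hm; simp only [mem_range, mem_Icc] at hm ⊢; omega
  · intro k _; omega
  · intro m hm; simp only [mem_Icc] at hm; omega
  · rw [add_sub_cancel, Int.toNat_natCast]

end FiniteTripleProduct

section UnitDisc

variable {x : ℂ}

lemma norm_pow_lt_one (hx : ‖x‖ < 1) {n : ℕ} (hn : n ≠ 0) : ‖x ^ n‖ < 1 := by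
  rw [norm_pow]
  exact pow_lt_one₀ (norm_nonneg x) hx hn

lemma one_sub_pow_succ_ne_zero (hx : ‖x‖ < 1) (n : ℕ) : 1 - x ^ (n + 1) ≠ 0 := by
  rw [sub_ne_zero]
  intro h
  simpa [← h] using norm_pow_lt_one hx n.succ_ne_zero

lemma multipliable_one_add_pow_mul (hx : ‖x‖ < 1) (u : ℂ) {e : ℕ → ℕ} (he : ∀ n, n ≤ e n) :
    Multipliable fun n => 1 + x ^ e n * u := by
  refine multipliable_one_add_of_summable <|
    ((summable_geometric_of_lt_one (norm_nonneg x) hx).mul_right ‖u‖).of_nonneg_of_le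
      (fun n => norm_nonneg _) fun n => ?_
  rw [norm_mul, norm_pow]
  exact mul_le_mul_of_nonneg_right (pow_le_pow_of_le_one (norm_nonneg x) hx.le (he n))
    (norm_nonneg u)

lemma tprod_one_sub_pow_ne_zero (hx : ‖x‖ < 1) : ∏' n : ℕ, (1 - x ^ (n + 1)) ≠ 0 := by
  simp_rw [sub_eq_add_neg]
  refine tprod_one_add_ne_zero_of_summable (fun n => ?_) ?_
  · rw [← sub_eq_add_neg]; exact one_sub_pow_succ_ne_zero hx n
  · simpa [norm_neg, norm_pow] using
      (summable_nat_add_iff 1).mpr (summable_geometric_of_lt_one (norm_nonneg x) hx)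

lemma qPochhammer_ne_zero (hx : ‖x‖ < 1) (n : ℕ) : qPochhammer x n ≠ 0 :=
  prod_ne_zero_iff.mpr fun i _ => one_sub_pow_succ_ne_zero hx i

lemma tendsto_qPochhammer (hx : ‖x‖ < 1) :
    Tendsto (qPochhammer x) atTop (𝓝 (∏' n : ℕ, (1 - x ^ (n + 1)))) :=
  (ModularForm.multipliable_one_sub_pow hx).hasProd.tendsto_prod_nat

lemma gaussBinom_eq_div (hx : ‖x‖ < 1) {n k : ℕ} (h : k ≤ n) :
    gaussBinom x n k = qPochhammer x n / (qPochhammer x k * qPochhammer x (n - k)) := by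
  rw [eq_div_iff (mul_ne_zero (qPochhammer_ne_zero hx k) (qPochhammer_ne_zero hx (n - k))),
    ← mul_assoc, gaussBinom_mul_qPochhammer_mul_qPochhammer x h]

lemma exists_norm_gaussBinom_le (hx : ‖x‖ < 1) : ∃ C, ∀ n k, ‖gaussBinom x n k‖ ≤ C := by
  have hP := tendsto_qPochhammer hx
  obtain ⟨A, hA⟩ := hP.norm.bddAbove_range
  obtain ⟨B, hB⟩ := (hP.inv₀ (tprod_one_sub_pow_ne_zero hx)).norm.bddAbove_range
  have hA' (n : ℕ) : ‖qPochhammer x n‖ ≤ A := hA ⟨n, rfl⟩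
  have hB' (n : ℕ) : ‖(qPochhammer x n)⁻¹‖ ≤ B := hB ⟨n, rfl⟩
  have hA0 : 0 ≤ A := (norm_nonneg _).trans (hA' 0)
  have hB0 : 0 ≤ B := (norm_nonneg _).trans (hB' 0)
  refine ⟨A * B * B, fun n k => ?_⟩
  rcases le_or_gt k n with h | h
  · rw [gaussBinom_eq_div hx h, div_eq_mul_inv, mul_inv, ← mul_assoc, norm_mul, norm_mul]
    exact mul_le_mul (mul_le_mul (hA' n) (hB' k) (norm_nonneg _) hA0) (hB' (n - k))
      (norm_nonneg _) (mul_nonneg hA0 hB0)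
  · rw [gaussBinom_of_lt x h, norm_zero]
    positivity

lemma tendsto_gaussBinom_central (hx : ‖x‖ < 1) (m : ℤ) :
    Tendsto (fun N : ℕ => gaussBinom x (2 * N) (N + m).toNat) atTop
      (𝓝 (∏' n : ℕ, (1 - x ^ (n + 1)))⁻¹) := by
  have hE := tprod_one_sub_pow_ne_zero hx
  have hP := tendsto_qPochhammer hx
  have h₁ : Tendsto (fun N : ℕ => 2 * N) atTop atTop :=
    tendsto_atTop_atTop.mpr fun b => ⟨b, fun N hN => by omega⟩
  have h₂ : Tendsto (fun N : ℕ => (N + m).toNat) atTop atTop :=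
    tendsto_atTop_atTop.mpr fun b => ⟨b + m.natAbs, fun N hN => by omega⟩
  have h₃ : Tendsto (fun N : ℕ => 2 * N - (N + m).toNat) atTop atTop :=
    tendsto_atTop_atTop.mpr fun b => ⟨b + m.natAbs, fun N hN => by omega⟩
  have hlim := (hP.comp h₁).div ((hP.comp h₂).mul (hP.comp h₃)) (mul_ne_zero hE hE)
  rw [div_mul_cancel_right₀ hE] at hlim
  refine hlim.congr' ?_
  filter_upwards [eventually_ge_atTop m.natAbs] with N hN
  exact (gaussBinom_eq_div hx (show (N + m).toNat ≤ 2 * N by omega)).symm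

theorem tprod_one_add_pow_mul_tprod_one_sub_pow_odd (hx : ‖x‖ < 1) :
    (∏' n : ℕ, (1 + x ^ (n + 1))) * ∏' n : ℕ, (1 - x ^ (2 * n + 1)) = 1 := by
  have hplus : Multipliable fun n : ℕ => 1 + x ^ (n + 1) := by
    simpa using multipliable_one_add_pow_mul hx 1 (e := (· + 1)) (by omega)
  have hminus (e : ℕ → ℕ) (he : ∀ n, n ≤ e n) : Multipliable fun n : ℕ => 1 - x ^ e n := by
    simpa [sub_eq_add_neg] using multipliable_one_add_pow_mul hx (-1) he
  set V := ∏' n : ℕ, (1 - x ^ (2 * n + 2))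
  have hV : V ≠ 0 := by
    convert tprod_one_sub_pow_ne_zero (norm_pow_lt_one hx two_ne_zero) using 3 with n
    ring
  have hsplit : (∏' n : ℕ, (1 - x ^ (2 * n + 1))) * V = ∏' n : ℕ, (1 - x ^ (n + 1)) :=
    tprod_even_mul_odd (f := fun n => 1 - x ^ (n + 1)) (hminus _ (by omega)) (hminus _ (by omega))
  have hsq : (∏' n : ℕ, (1 - x ^ (n + 1))) * ∏' n : ℕ, (1 + x ^ (n + 1)) = V := by
    rw [← (hminus _ (by omega)).tprod_mul hplus]
    exact tprod_congr fun n => by ring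
  refine mul_right_cancel₀ hV ?_
  linear_combination (∏' n : ℕ, (1 + x ^ (n + 1))) * hsplit + hsq

end UnitDisc

section TripleProduct

lemma norm_cexp_pi_mul_I_lt_one {τ : ℂ} (hτ : 0 < τ.im) : ‖cexp (π * I * τ)‖ < 1 := by
  rw [norm_exp, Real.exp_lt_one_iff]
  simpa [mul_re, mul_im] using mul_pos Real.pi_pos hτ

lemma jacobiTheta₂_term_eq {z τ q w : ℂ} (hq : cexp (π * I * τ) = q)
    (hw : cexp (2 * π * I * z) = w) (n : ℤ) : jacobiTheta₂_term n z τ = q ^ (n ^ 2) * w ^ n := by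
  rw [jacobiTheta₂_term, ← hq, ← hw, ← exp_int_mul, ← exp_int_mul, ← Complex.exp_add]
  congr 1
  push_cast
  ring

/-- The Jacobi triple product. -/
theorem jacobiTheta₂_eq_tprod {z τ q w : ℂ} (hτ : 0 < τ.im) (hq : cexp (π * I * τ) = q)
    (hw : cexp (2 * π * I * z) = w) :
    jacobiTheta₂ z τ = (∏' n : ℕ, (1 - (q ^ 2) ^ (n + 1))) *
      (∏' n : ℕ, (1 + q ^ (2 * n + 1) * w)) * ∏' n : ℕ, (1 + q ^ (2 * n + 1) * w⁻¹) := by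
  have hq1 : ‖q‖ < 1 := hq ▸ norm_cexp_pi_mul_I_lt_one hτ
  have hq0 : q ≠ 0 := hq ▸ exp_ne_zero _
  have hw0 : w ≠ 0 := hw ▸ exp_ne_zero _
  have hx : ‖q ^ 2‖ < 1 := norm_pow_lt_one hq1 two_ne_zero
  set E := ∏' n : ℕ, (1 - (q ^ 2) ^ (n + 1))
  obtain ⟨C, hC⟩ := exists_norm_gaussBinom_le hx
  have hC0 : 0 ≤ C := (norm_nonneg _).trans (hC 0 0)
  set c : ℕ → ℤ → ℂ :=
    fun N m => if m.natAbs ≤ N then gaussBinom (q ^ 2) (2 * N) (N + m).toNat else 0 with hc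
  have hfinite (N : ℕ) :
      ∏ j ∈ range N, ((1 + q ^ (2 * j + 1) * w) * (1 + q ^ (2 * j + 1) * w⁻¹)) =
        ∑' m, c N m * jacobiTheta₂_term m z τ := by
    rw [prod_one_add_mul_one_add_inv_eq_sum_Icc hq0 hw0, tsum_eq_sum (s := Icc (-N : ℤ) N)]
    · refine sum_congr rfl fun m hm => ?_
      rw [mem_Icc] at hm
      simp only [hc, jacobiTheta₂_term_eq hq hw, if_pos (show m.natAbs ≤ N by omega)]
    · intro m hm
      rw [mem_Icc] at hm
      simp only [hc, if_neg (show ¬m.natAbs ≤ N by omega), zero_mul]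
  have hmw := multipliable_one_add_pow_mul hq1 w (e := (2 * · + 1)) (by omega)
  have hmw' := multipliable_one_add_pow_mul hq1 w⁻¹ (e := (2 * · + 1)) (by omega)
  have hprod := (hmw.mul hmw').hasProd.tendsto_prod_nat
  rw [hmw.tprod_mul hmw'] at hprod
  have hsum : Tendsto (fun N => ∑' m, c N m * jacobiTheta₂_term m z τ) atTop
      (𝓝 (∑' m, E⁻¹ * jacobiTheta₂_term m z τ)) := by
    refine tendsto_tsum_of_dominated_convergence (bound := fun m => C * ‖jacobiTheta₂_term m z τ‖)
      (((summable_jacobiTheta₂_term_iff z τ).mpr hτ).norm.mul_left C) (fun m => ?_) ?_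
    · refine ((tendsto_gaussBinom_central hx m).mul_const (jacobiTheta₂_term m z τ)).congr' ?_
      filter_upwards [eventually_ge_atTop m.natAbs] with N hN
      simp only [hc, if_pos hN]
    · refine Eventually.of_forall fun N m => ?_
      rw [norm_mul]
      refine mul_le_mul_of_nonneg_right ?_ (norm_nonneg _)
      simp only [hc]
      split_ifs
      exacts [hC _ _, norm_zero.trans_le hC0]
  rw [tsum_mul_left] at hsum
  have hlim := tendsto_nhds_unique (hsum.congr fun N => (hfinite N).symm) hprod
  rw [jacobiTheta₂, mul_assoc E, ← hlim, ← mul_assoc,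
    mul_inv_cancel₀ (tprod_one_sub_pow_ne_zero hx), one_mul]

end TripleProduct

section ThetaConstants

lemma jTheta₂_zero_left (τ : ℂ) :
    jTheta₂ 0 τ = cexp (π * I * τ / 4) * jacobiTheta₂ (τ / 2) τ := by
  rw [jTheta₂, jacobiTheta₂, ← tsum_mul_left]
  refine tsum_congr fun n => ?_
  rw [jacobiTheta₂_term, ← Complex.exp_add]
  congr 1
  ring

lemma jTheta₃_zero_left (τ : ℂ) : jTheta₃ 0 τ = jacobiTheta₂ 0 τ :=
  tsum_congr fun n => by rw [jacobiTheta₂_term]; congr 1; ring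

lemma jTheta₄_zero_left (τ : ℂ) : jTheta₄ 0 τ = jacobiTheta₂ (1 / 2) τ := by
  refine tsum_congr fun n => ?_
  rw [jacobiTheta₂_term, ← exp_pi_mul_I, ← exp_int_mul, ← Complex.exp_add]
  congr 1
  ring

theorem jacobiTheta₂_half_tau_mul_zero_mul_half {τ : ℂ} (hτ : 0 < τ.im) :
    jacobiTheta₂ (τ / 2) τ * jacobiTheta₂ 0 τ * jacobiTheta₂ (1 / 2) τ =
      2 * (∏' n : ℕ, (1 - cexp (2 * π * I * τ) ^ (n + 1))) ^ 3 := by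
  set q := cexp (π * I * τ) with hq
  have hq1 : ‖q‖ < 1 := norm_cexp_pi_mul_I_lt_one hτ
  have hq0 : q ≠ 0 := exp_ne_zero _
  have hx : ‖q ^ 2‖ < 1 := norm_pow_lt_one hq1 two_ne_zero
  have hq2 : q ^ 2 = cexp (2 * π * I * τ) := by
    rw [← Complex.exp_nat_mul]; congr 1; push_cast; ring
  rw [jacobiTheta₂_eq_tprod hτ hq.symm (w := q) (by rw [hq]; congr 1; ring),
    jacobiTheta₂_eq_tprod hτ hq.symm (w := 1) (by simp),
    jacobiTheta₂_eq_tprod hτ hq.symm (w := -1) (by rw [← exp_pi_mul_I]; congr 1; ring), ← hq2]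
  set E := ∏' n : ℕ, (1 - (q ^ 2) ^ (n + 1))
  set Q := ∏' n : ℕ, (1 + (q ^ 2) ^ (n + 1))
  set O := ∏' n : ℕ, (1 - (q ^ 2) ^ (2 * n + 1))
  have hQ : ∏' n : ℕ, (1 + q ^ (2 * n + 1) * q) = Q :=
    tprod_congr fun n => by ring
  have hQ' : ∏' n : ℕ, (1 + q ^ (2 * n + 1) * q⁻¹) = 2 * Q := by
    have hshift : Multipliable fun n : ℕ => 1 + q ^ (2 * (n + 1) + 1) * q⁻¹ :=
      (multipliable_one_add_pow_mul hx 1 (e := (· + 1)) (by omega)).congr fun n => by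
        field_simp
        ring
    rw [tprod_eq_zero_mul' (f := fun n : ℕ => 1 + q ^ (2 * n + 1) * q⁻¹) hshift]
    congr 1
    · field_simp
      ring
    · exact tprod_congr fun n => by field_simp; ring
  set A := ∏' n : ℕ, (1 + q ^ (2 * n + 1) * 1)
  set B := ∏' n : ℕ, (1 + q ^ (2 * n + 1) * (-1))
  have hO : A * B = O := by
    rw [← (multipliable_one_add_pow_mul hq1 1 (e := (2 * · + 1)) (by omega)).tprod_mul
      (multipliable_one_add_pow_mul hq1 (-1) (e := (2 * · + 1)) (by omega))]
    exact tprod_congr fun n => by ring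
  have hEuler : Q * O = 1 := tprod_one_add_pow_mul_tprod_one_sub_pow_odd hx
  simp only [inv_one, inv_neg, hQ, hQ']
  linear_combination 2 * E ^ 3 * (Q * A * B + 1) * Q * hO + 2 * E ^ 3 * (Q * A * B + 1) * hEuler

end ThetaConstants

/-- the product formula for theta constants:
`(θ₂(0,τ)·θ₃(0,τ)·θ₄(0,τ))⁸ = 2⁸·q̃·∏_{n≥1}(1 − q̃ⁿ)²⁴` with `q̃ = exp(2iπτ)`;
in particular `|θ₂θ₃θ₄|⁸ = 2⁸·|Δ(τ)|` for the modular discriminant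
`Δ(τ) = q̃·∏_{n≥1}(1 − q̃ⁿ)²⁴`. -/
theorem theta_product_modular_discriminant (τ : ℂ) (hτ : 0 < τ.im) :
    Multipliable (fun n : ℕ => 1 - Complex.exp (2 * Real.pi * Complex.I * τ) ^ (n + 1)) ∧
    (jTheta₂ 0 τ * jTheta₃ 0 τ * jTheta₄ 0 τ) ^ 8 =
      2 ^ 8 * Complex.exp (2 * Real.pi * Complex.I * τ) *
        (∏' n : ℕ, (1 - Complex.exp (2 * Real.pi * Complex.I * τ) ^ (n + 1))) ^ 24 ∧
    ‖jTheta₂ 0 τ * jTheta₃ 0 τ * jTheta₄ 0 τ‖ ^ 8 =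
      2 ^ 8 * ‖Complex.exp (2 * Real.pi * Complex.I * τ) *
        (∏' n : ℕ, (1 - Complex.exp (2 * Real.pi * Complex.I * τ) ^ (n + 1))) ^ 24‖ := by
  have hθ : (jTheta₂ 0 τ * jTheta₃ 0 τ * jTheta₄ 0 τ) ^ 8 =
      2 ^ 8 * cexp (2 * π * I * τ) * (∏' n : ℕ, (1 - cexp (2 * π * I * τ) ^ (n + 1))) ^ 24 := by
    have h8 : cexp (π * I * τ / 4) ^ 8 = cexp (2 * π * I * τ) := by
      rw [← Complex.exp_nat_mul]; congr 1; push_cast; ring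
    rw [jTheta₂_zero_left, jTheta₃_zero_left, jTheta₄_zero_left, mul_assoc, mul_assoc,
      ← mul_assoc (jacobiTheta₂ _ _), jacobiTheta₂_half_tau_mul_zero_mul_half hτ, mul_pow, h8]
    ring
  refine ⟨ModularForm.multipliable_one_sub_pow (UpperHalfPlane.norm_exp_two_pi_I_lt_one ⟨τ, hτ⟩),
    hθ, ?_⟩
  rw [← norm_pow, hθ, mul_assoc, norm_mul, norm_pow, Complex.norm_two]
end

section
/- Let τ ∈ ℂ with Im τ > 0 and z ∈ ℂ. Then the four Jacobi theta functions have no common zero: it is not the case that θ₁(z,τ) = θ₂(z,τ) = θ₃(z,τ) = θ₄(z,τ) = 0. In particular the vector (θ₁(z,τ), θ₂(z,τ), θ₃(z,τ), θ₄(z,τ)) ∈ ℂ⁴ is nonzero and defines a point of projective space ℙ³(ℂ). -/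
open Complex

/-!
Writing `θ = jacobiTheta₂`, the four functions are, up to nowhere-vanishing factors, `θ(·, τ)` at
the four points `z`, `z + 1/2`, `z + τ/2`, `z + τ/2 + 1/2`. By periodicity and quasi-periodicity a
common zero would make `θ(·, τ)` vanish on the whole coset `z + ½(ℤ + τℤ)`. This property is
transported by `τ ↦ τ + k` and `τ ↦ -1/τ` (moving `z` accordingly), and alternating the two
pushes `Im τ` above `3/4`. There some point `w` of the coset has `|Im w| ≤ Im τ / 4`, and for such
`w` the constant term `1` of the series `θ(w, τ)` outweighs all the others, so `θ(w, τ) ≠ 0`.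
-/

open Real

lemma norm_tsum_int_sub_le_of_norm_le_pow {E : Type*} [NormedAddCommGroup E] [CompleteSpace E]
    {f : ℤ → E} {r : ℝ} (hr : r < 1) (hf : ∀ n, ‖f n‖ ≤ r ^ n.natAbs) :
    ‖∑' n, f n - f 0‖ ≤ 2 * r / (1 - r) := by
  have hr₀ : 0 ≤ r := (norm_nonneg _).trans ((hf 1).trans_eq (pow_one r))
  have hgeom : HasSum (fun n : ℕ ↦ r ^ (n + 1)) (r / (1 - r)) := by
    simpa only [pow_succ', div_eq_mul_inv] using (hasSum_geometric_of_lt_one hr₀ hr).mul_left r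
  have hpos (n : ℕ) : ‖f (n + 1)‖ ≤ r ^ (n + 1) := (hf _).trans_eq (by congr 1)
  have hneg (n : ℕ) : ‖f (-(n + 1))‖ ≤ r ^ (n + 1) := (hf _).trans_eq (by congr 1)
  rw [tsum_of_add_one_of_neg_add_one (hgeom.summable.of_norm_bounded hpos)
    (hgeom.summable.of_norm_bounded hneg), add_sub_right_comm, add_sub_cancel_right]
  calc _ ≤ _ := norm_add_le _ _
    _ ≤ r / (1 - r) + r / (1 - r) :=
      add_le_add (tsum_of_norm_bounded hgeom hpos) (tsum_of_norm_bounded hgeom hneg)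
    _ = 2 * r / (1 - r) := by ring

lemma norm_jacobiTheta₂_term_le_pow {z τ : ℂ} (hz : |z.im| ≤ τ.im / 4) (n : ℤ) :
    ‖jacobiTheta₂_term n z τ‖ ≤ rexp (-π * τ.im / 2) ^ n.natAbs := by
  rw [norm_jacobiTheta₂_term, ← Real.exp_nat_mul, Real.exp_le_exp]
  have ha_le : (n.natAbs : ℝ) ≤ (n.natAbs : ℝ) ^ 2 := by
    exact_mod_cast Nat.le_self_pow two_ne_zero n.natAbs
  set a : ℝ := (n.natAbs : ℝ)
  have ha : a = |(n : ℝ)| := by simp [a, Nat.cast_natAbs]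
  have hsq : (n : ℝ) ^ 2 = a ^ 2 := by rw [ha, sq_abs]
  have hY : 0 ≤ τ.im := by linarith [abs_nonneg z.im]
  have hnz : |(n : ℝ) * z.im| ≤ a * (τ.im / 4) := by
    rw [abs_mul, ← ha]; exact mul_le_mul_of_nonneg_left hz (Nat.cast_nonneg _)
  have hX : 0 ≤ (n : ℝ) ^ 2 * τ.im + 2 * n * z.im - a * τ.im / 2 := by
    rw [hsq]; nlinarith [abs_le.mp hnz, mul_le_mul_of_nonneg_right ha_le hY]
  nlinarith [mul_nonneg Real.pi_pos.le hX]

lemma jacobiTheta₂_ne_zero_of_abs_im_le {z τ : ℂ} (hτ : 3 / 4 ≤ τ.im)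
    (hz : |z.im| ≤ τ.im / 4) : jacobiTheta₂ z τ ≠ 0 := by
  set r := rexp (-π * τ.im / 2)
  have hr : r < 1 / 3 := by
    have h98 : (3 : ℝ) < rexp (9 / 8) := by
      rw [show (9 / 8 : ℝ) = 1 + 1 / 8 by norm_num, Real.exp_add]
      nlinarith [Real.exp_one_gt_d9, Real.add_one_le_exp (1 / 8), Real.exp_pos (1 / 8)]
    calc r ≤ rexp (-(9 / 8)) := Real.exp_le_exp.mpr (by nlinarith [Real.pi_gt_three])
      _ < 1 / 3 := by rw [Real.exp_neg, one_div]; exact inv_strictAnti₀ (by norm_num) h98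
  have hsub := norm_tsum_int_sub_le_of_norm_le_pow (hr.trans (by norm_num))
    (norm_jacobiTheta₂_term_le_pow hz)
  rw [show jacobiTheta₂_term 0 z τ = 1 by simp [jacobiTheta₂_term]] at hsub
  intro h₀
  rw [← jacobiTheta₂, h₀, zero_sub, norm_neg, norm_one, le_div_iff₀ (by linarith)] at hsub
  linarith

lemma jacobiTheta₂_add_int_right (z τ : ℂ) (k : ℤ) :
    jacobiTheta₂ z (τ + k) = jacobiTheta₂ (z + k / 2) τ := by
  refine tsum_congr fun n ↦ ?_
  obtain ⟨m, hm⟩ := Int.even_mul_pred_self n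
  have hn : (n : ℂ) ^ 2 = n + 2 * m := by
    have := congrArg (Int.cast : ℤ → ℂ) hm
    push_cast at this
    linear_combination this
  rw [jacobiTheta₂_term, jacobiTheta₂_term, hn,
    show 2 * π * I * n * z + π * I * (n + 2 * m) * (τ + k) =
      2 * π * I * n * (z + k / 2) + π * I * (n + 2 * m) * τ + (k * m : ℤ) * (2 * π * I) by
      push_cast; ring, Complex.exp_add, exp_int_mul_two_pi_mul_I, mul_one]

lemma jacobiTheta₂_add_int_mul_left (z τ : ℂ) (n : ℤ) :
    jacobiTheta₂ (z + n * τ) τ = cexp (-π * I * (n ^ 2 * τ + 2 * n * z)) * jacobiTheta₂ z τ := by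
  conv_rhs => rw [jacobiTheta₂, ← tsum_mul_left, ← (Equiv.addRight n).tsum_eq]
  refine tsum_congr fun k ↦ ?_
  simp_rw [jacobiTheta₂_term, ← Complex.exp_add, Equiv.coe_addRight, Int.cast_add]
  ring_nf

lemma jacobiTheta₂_add_int_add_int_mul_eq_zero {z τ : ℂ} (h : jacobiTheta₂ z τ = 0) (m n : ℤ) :
    jacobiTheta₂ (z + m + n * τ) τ = 0 := by
  have hper : Function.Periodic (jacobiTheta₂ · τ) 1 := (jacobiTheta₂_add_left · τ)
  rw [jacobiTheta₂_add_int_mul_left, ← mul_one (m : ℂ), show jacobiTheta₂ (z + m * 1) τ = 0 from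
    (hper.int_mul m z).trans h, mul_zero]

lemma jacobiTheta₂_div_neg_inv_eq_zero {z τ : ℂ} (hτ : τ ≠ 0) (h : jacobiTheta₂ z τ = 0) :
    jacobiTheta₂ (z / τ) (-1 / τ) = 0 := by
  rw [jacobiTheta₂_functional_equation, show z / τ / (-1 / τ) = -z by field_simp,
    show (-1 : ℂ) / (-1 / τ) = τ by field_simp, jacobiTheta₂_neg_left, h, mul_zero]

def ThetaVanishesOnHalfLattice (τ z : ℂ) : Prop :=
  ∀ m n : ℤ, jacobiTheta₂ (z + m / 2 + n * τ / 2) τ = 0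

namespace ThetaVanishesOnHalfLattice

lemma of_four {τ z : ℂ} (h₀ : jacobiTheta₂ z τ = 0) (h₁ : jacobiTheta₂ (z + 1 / 2) τ = 0)
    (h₂ : jacobiTheta₂ (z + τ / 2) τ = 0) (h₃ : jacobiTheta₂ (z + τ / 2 + 1 / 2) τ = 0) :
    ThetaVanishesOnHalfLattice τ z := by
  have parity (m : ℤ) : ∃ a i : ℤ, (i = 0 ∨ i = 1) ∧ m = 2 * a + i :=
    ⟨m / 2, m % 2, Int.emod_two_eq_zero_or_one m, by omega⟩
  intro m n
  obtain ⟨a, i, hi, rfl⟩ := parity m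
  obtain ⟨b, j, hj, rfl⟩ := parity n
  rcases hi with rfl | rfl <;> rcases hj with rfl | rfl
  · convert jacobiTheta₂_add_int_add_int_mul_eq_zero h₀ a b using 2; push_cast; ring
  · convert jacobiTheta₂_add_int_add_int_mul_eq_zero h₂ a b using 2; push_cast; ring
  · convert jacobiTheta₂_add_int_add_int_mul_eq_zero h₁ a b using 2; push_cast; ring
  · convert jacobiTheta₂_add_int_add_int_mul_eq_zero h₃ a b using 2; push_cast; ring

lemma add_int {τ z : ℂ} (h : ThetaVanishesOnHalfLattice τ z) (k : ℤ) :
    ThetaVanishesOnHalfLattice (τ + k) (z - k / 2) := by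
  intro m n
  rw [jacobiTheta₂_add_int_right]
  convert h (m + n * k) n using 2
  push_cast
  ring

lemma neg_inv {τ z : ℂ} (hτ : τ ≠ 0) (h : ThetaVanishesOnHalfLattice τ z) :
    ThetaVanishesOnHalfLattice (-1 / τ) (z / τ) := by
  intro m n
  convert jacobiTheta₂_div_neg_inv_eq_zero hτ (h (-n) m) using 2
  field_simp
  push_cast
  ring

lemma exists_im_ge_of_im_lt {τ z : ℂ} (h : ThetaVanishesOnHalfLattice τ z) (hτ : 0 < τ.im)
    (hsmall : τ.im < 3 / 4) :
    ∃ τ' z', ThetaVanishesOnHalfLattice τ' z' ∧ 16 / 13 * τ.im ≤ τ'.im := by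
  set τ₁ := τ + ((-round τ.re : ℤ) : ℂ)
  have hre : |τ₁.re| ≤ 1 / 2 := by
    simpa [τ₁, abs_sub_comm, ← sub_eq_add_neg] using abs_sub_round τ.re
  have him : τ₁.im = τ.im := by simp [τ₁]
  have hτ₁ : τ₁ ≠ 0 := fun h₀ ↦ by simp [h₀] at him; linarith
  have hnormSq : normSq τ₁ ≤ 13 / 16 := by
    rw [normSq_apply, him]
    nlinarith [abs_le.mp hre]
  refine ⟨-1 / τ₁, _, (h.add_int _).neg_inv hτ₁, ?_⟩
  rw [show (-1 / τ₁).im = τ₁.im / normSq τ₁ by rw [neg_div, neg_im, one_div, inv_im]; ring, him,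
    le_div_iff₀ (normSq_pos.mpr hτ₁)]
  nlinarith

lemma exists_three_quarters_le_im {τ z : ℂ} (h : ThetaVanishesOnHalfLattice τ z)
    (hτ : 0 < τ.im) : ∃ τ' z', ThetaVanishesOnHalfLattice τ' z' ∧ 3 / 4 ≤ τ'.im := by
  obtain ⟨N, hN⟩ := pow_unbounded_of_one_lt (3 / 4 / τ.im) (by norm_num : (1 : ℝ) < 16 / 13)
  rw [div_lt_iff₀ hτ] at hN
  induction N generalizing τ z with
  | zero => exact ⟨τ, z, h, by linarith⟩
  | succ N ih =>
    by_cases hlarge : 3 / 4 ≤ τ.im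
    · exact ⟨τ, z, h, hlarge⟩
    obtain ⟨τ', z', h', hτ'⟩ := h.exists_im_ge_of_im_lt hτ (not_le.mp hlarge)
    refine ih h' (by linarith) ?_
    calc 3 / 4 < (16 / 13) ^ (N + 1) * τ.im := hN
      _ = (16 / 13) ^ N * (16 / 13 * τ.im) := by ring
      _ ≤ (16 / 13) ^ N * τ'.im := by gcongr

lemma false_of_three_quarters_le_im {τ z : ℂ} (h : ThetaVanishesOnHalfLattice τ z)
    (hτ : 3 / 4 ≤ τ.im) : False := by
  set n : ℤ := -round (2 * z.im / τ.im)
  refine jacobiTheta₂_ne_zero_of_abs_im_le hτ ?_ (h 0 n)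
  have hround := abs_sub_round (2 * z.im / τ.im)
  have hY : 0 < τ.im := by linarith
  calc |(z + ((0 : ℤ) : ℂ) / 2 + n * τ / 2).im|
      = |τ.im / 2 * (2 * z.im / τ.im - round (2 * z.im / τ.im))| := by
        congr 1
        simp only [Int.cast_zero, zero_div, add_zero, Int.cast_neg, neg_mul, add_im, div_ofNat_im,
          neg_im, mul_im, intCast_re, intCast_im, zero_mul, n]
        field_simp
        ring
    _ = τ.im / 2 * |2 * z.im / τ.im - round (2 * z.im / τ.im)| := by
        rw [abs_mul, abs_of_pos (half_pos hY)]
    _ ≤ τ.im / 4 := by nlinarith [abs_nonneg (2 * z.im / τ.im - round (2 * z.im / τ.im))]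

end ThetaVanishesOnHalfLattice

lemma jTheta₃_eq_jacobiTheta₂ (z τ : ℂ) : jTheta₃ z τ = jacobiTheta₂ z τ :=
  tsum_congr fun n ↦ by rw [jacobiTheta₂_term]; ring_nf

lemma jTheta₄_eq_jacobiTheta₂ (z τ : ℂ) : jTheta₄ z τ = jacobiTheta₂ (z + 1 / 2) τ := by
  refine tsum_congr fun n ↦ ?_
  rw [jacobiTheta₂_term, ← exp_pi_mul_I, ← exp_int_mul, ← Complex.exp_add]
  ring_nf

lemma jTheta₂_eq_jacobiTheta₂ (z τ : ℂ) :
    jTheta₂ z τ = cexp (π * I * (τ / 4 + z)) * jacobiTheta₂ (z + τ / 2) τ := by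
  rw [jacobiTheta₂, ← tsum_mul_left]
  refine tsum_congr fun n ↦ ?_
  rw [jacobiTheta₂_term, ← Complex.exp_add]
  ring_nf

lemma jTheta₁_eq_jacobiTheta₂ (z τ : ℂ) :
    jTheta₁ z τ = -I * cexp (π * I * (τ / 4 + z)) * jacobiTheta₂ (z + τ / 2 + 1 / 2) τ := by
  rw [jacobiTheta₂, ← tsum_mul_left]
  refine tsum_congr fun n ↦ ?_
  rw [jacobiTheta₂_term, ← exp_pi_mul_I, ← exp_int_mul, mul_assoc (-I), ← Complex.exp_add,
    mul_assoc (-I), ← Complex.exp_add]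
  ring_nf

/-- the four Jacobi theta functions have no common zero; in particular
the vector `(θ₁(z,τ), θ₂(z,τ), θ₃(z,τ), θ₄(z,τ))` is a nonzero vector of `ℂ⁴`. -/
theorem jTheta_no_common_zero (τ : ℂ) (hτ : 0 < τ.im) (z : ℂ) :
    (¬ (jTheta₁ z τ = 0 ∧ jTheta₂ z τ = 0 ∧ jTheta₃ z τ = 0 ∧ jTheta₄ z τ = 0)) ∧
    ![jTheta₁ z τ, jTheta₂ z τ, jTheta₃ z τ, jTheta₄ z τ] ≠ 0 := by
  have hnot : ¬ (jTheta₁ z τ = 0 ∧ jTheta₂ z τ = 0 ∧ jTheta₃ z τ = 0 ∧ jTheta₄ z τ = 0) := by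
    rintro ⟨h₁, h₂, h₃, h₄⟩
    simp only [jTheta₁_eq_jacobiTheta₂, jTheta₂_eq_jacobiTheta₂, jTheta₃_eq_jacobiTheta₂,
      jTheta₄_eq_jacobiTheta₂, mul_eq_zero, neg_eq_zero, I_ne_zero, Complex.exp_ne_zero,
      false_or] at h₁ h₂ h₃ h₄
    obtain ⟨τ', z', h', hτ'⟩ :=
      (ThetaVanishesOnHalfLattice.of_four h₃ h₄ h₂ h₁).exists_three_quarters_le_im hτ
    exact h'.false_of_three_quarters_le_im hτ'
  exact ⟨hnot, fun hv ↦ hnot ⟨congrFun hv 0, congrFun hv 1, congrFun hv 2, congrFun hv 3⟩⟩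
end
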